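/- Let X be a preordered Banach space and Q a compact Hausdorff space. Then C^1 ⊆ S^{1F}: every f ∈ C(Q,X) with ‖f(p)‖ ≤ 1 for all p is sup-d-finite in S^1 = S ∩ B^1, i.e. sup-d(f, g_λ) → sup-d(f, g) whenever (g_λ) is a sup-d-Cauchy net with terms in S^1 and g_λ →^◦_◦ g with g ∈ S^1 (holes tested against all elements of B). -/

import Mathlib

open TopologicalSpace ENNReal

/-- A (possibly non-reflexive) transitive relation, used to index nets. -/
def TransRel {ι : Type} (r : ι → ι → Prop) : Prop := ∀ a b c, r a b → r b c → r a c

/-- Directedness of the index relation of a net. -/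
def DirRel {ι : Type} (r : ι → ι → Prop) : Prop := ∀ a b, ∃ c, r a c ∧ r b c

/-- `liminf` of a net of extended nonnegative reals over a directed index:
`sup_γ inf_{γ ≺ δ} a δ`. -/
noncomputable def liminfN {ι : Type} (r : ι → ι → Prop) (a : ι → ℝ≥0∞) : ℝ≥0∞ :=
  ⨆ γ, ⨅ δ, ⨅ _ : r γ δ, a δ

/-- `limsup` of a net of extended nonnegative reals over a directed index:
`inf_γ sup_{γ ≺ δ} a δ`. -/
noncomputable def limsupN {ι : Type} (r : ι → ι → Prop) (a : ι → ℝ≥0∞) : ℝ≥0∞ :=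
  ⨅ γ, ⨆ δ, ⨆ _ : r γ δ, a δ

/-- Convergence of a net in `ℝ≥0∞` to `L`. -/
def TendstoN {ι : Type} (r : ι → ι → Prop) (a : ι → ℝ≥0∞) (L : ℝ≥0∞) : Prop :=
  liminfN r a = L ∧ limsupN r a = L

/-- Convergence of a real-valued net. -/
def TendstoRN {ι : Type} (r : ι → ι → Prop) (a : ι → ℝ) (L : ℝ) : Prop :=
  ∀ ε : ℝ, 0 < ε → ∃ γ₀, ∀ γ, r γ₀ γ → |a γ - L| < ε

/-- A distance: a `[0,∞]`-valued function satisfying the triangle inequality. -/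
def IsDistance {X : Type} (d : X → X → ℝ≥0∞) : Prop :=
  ∀ x y z, d x z ≤ d x y + d y z

/-- `d`-Cauchy net: `lim_γ sup_{γ ≺ δ} d(x_γ, x_δ) = 0`. -/
def DCauchyN {ι X : Type} (r : ι → ι → Prop) (d : X → X → ℝ≥0∞) (x : ι → X) : Prop :=
  ∀ ε : ℝ≥0∞, 0 < ε → ∃ γ₀, ∀ γ δ, r γ₀ γ → r γ δ → d (x γ) (x δ) < ε

/-- `d`-dominating net: `sup_γ lim_{γ ≺ δ} d(x_γ, x_δ) = 0`. -/
def DDomN {ι X : Type} (r : ι → ι → Prop) (d : X → X → ℝ≥0∞) (x : ι → X) : Prop :=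
  ∀ γ, ∀ ε : ℝ≥0∞, 0 < ε → ∃ δ₀, r γ δ₀ ∧ ∀ δ, r δ₀ δ → d (x γ) (x δ) < ε

/-- `x_λ →^◦ l` with holes tested against points of `T`:
`liminf_λ d(x_λ, c) ≥ d(l, c)` for all `c ∈ T`. -/
def UpperConvOn {ι X : Type} (r : ι → ι → Prop) (d : X → X → ℝ≥0∞) (T : Set X)
    (x : ι → X) (l : X) : Prop :=
  ∀ c ∈ T, d l c ≤ liminfN r fun γ => d (x γ) c

/-- `x_λ →_◦ l` with holes tested against points of `T`:
`liminf_λ d(c, x_λ) ≥ d(c, l)` for all `c ∈ T`. -/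
def LowerConvOn {ι X : Type} (r : ι → ι → Prop) (d : X → X → ℝ≥0∞) (T : Set X)
    (x : ι → X) (l : X) : Prop :=
  ∀ c ∈ T, d c l ≤ liminfN r fun γ => d c (x γ)

/-- `x_λ →^◦_◦ l` with holes tested against points of `T`. -/
def BiConvOn {ι X : Type} (r : ι → ι → Prop) (d : X → X → ℝ≥0∞) (T : Set X)
    (x : ι → X) (l : X) : Prop :=
  UpperConvOn r d T x l ∧ LowerConvOn r d T x l

/-- The supremum distance on functions `Q → X`. -/
noncomputable def supD {Q X : Type} (d : X → X → ℝ≥0∞) (f g : Q → X) : ℝ≥0∞ :=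
  ⨆ p, d (f p) (g p)

/-- The upper ball topology `X^•`, generated by the balls `{x | d c x < ε}`. -/
def upperBallTop {X : Type} (d : X → X → ℝ≥0∞) : TopologicalSpace X :=
  TopologicalSpace.generateFrom {s | ∃ c, ∃ ε : ℝ≥0∞, 0 < ε ∧ s = {x | d c x < ε}}

/-- The lower ball topology `X_•`, generated by the balls `{x | d x c < ε}`. -/
def lowerBallTop {X : Type} (d : X → X → ℝ≥0∞) : TopologicalSpace X :=
  TopologicalSpace.generateFrom {s | ∃ c, ∃ ε : ℝ≥0∞, 0 < ε ∧ s = {x | d x c < ε}}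

/-- `X` is `d`-complete: every `d`-Cauchy net has a `→^◦_◦`-limit. -/
def DComplete {X : Type} (d : X → X → ℝ≥0∞) : Prop :=
  ∀ (ι : Type) (r : ι → ι → Prop) (x : ι → X), Nonempty ι → TransRel r → DirRel r →
    DCauchyN r d x → ∃ l, BiConvOn r d Set.univ x l

/-- `y` is `d`-finite: `d(y, x_λ) → d(y, l)` whenever `(x_λ)` is `d`-Cauchy and
`x_λ →^◦_◦ l`. -/
def DFinite {X : Type} (d : X → X → ℝ≥0∞) (y : X) : Prop :=
  ∀ (ι : Type) (r : ι → ι → Prop) (x : ι → X) (l : X), Nonempty ι → TransRel r → DirRel r →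
    DCauchyN r d x → BiConvOn r d Set.univ x l →
      TendstoN r (fun γ => d y (x γ)) (d y l)

/-- The `d`-finite topology `X^{F•}`, generated by upper balls with `d`-finite centres. -/
def dFiniteTop {X : Type} (d : X → X → ℝ≥0∞) : TopologicalSpace X :=
  TopologicalSpace.generateFrom
    {s | ∃ c, DFinite d c ∧ ∃ ε : ℝ≥0∞, 0 < ε ∧ s = {x | d c x < ε}}

/-- The bidual `X**` of a real normed space. -/
abbrev Bidual (X : Type) [NormedAddCommGroup X] [NormedSpace ℝ X] : Type :=
  StrongDual ℝ (StrongDual ℝ X)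

/-- The positive cone of a preordered Banach space: a norm-closed set containing `0`,
closed under nonnegative scaling and addition. -/
def IsGoodCone (X : Type) [NormedAddCommGroup X] [NormedSpace ℝ X] (K : Set X) : Prop :=
  IsClosed K ∧ (0 : X) ∈ K ∧ (∀ r : ℝ, 0 ≤ r → ∀ x ∈ K, r • x ∈ K) ∧
    ∀ x ∈ K, ∀ y ∈ K, x + y ∈ K

/-- `Q = X^{*1}_+`, the positive unit ball of the dual. -/
def posQ (X : Type) [NormedAddCommGroup X] [NormedSpace ℝ X] (K : Set X) :
    Set (StrongDual ℝ X) :=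
  {φ | ‖φ‖ ≤ 1 ∧ ∀ v ∈ K, 0 ≤ φ v}

/-- The canonical hemimetric on `X**`: `d(x,y) = ‖x - y‖_≤ = sup_{φ ∈ Q} φ(x - y)`. -/
noncomputable def ddist {X : Type} [NormedAddCommGroup X] [NormedSpace ℝ X] (K : Set X)
    (x y : Bidual X) : ℝ≥0∞ :=
  ⨆ φ ∈ posQ X K, ENNReal.ofReal ((x - y) φ)

/-- The weak* topology on `Q = X^{*1}_+`. -/
def qTop (X : Type) [NormedAddCommGroup X] [NormedSpace ℝ X] (K : Set X) :
    TopologicalSpace (posQ X K) :=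
  TopologicalSpace.induced (fun φ : posQ X K => fun v : X => φ.1 v) inferInstance

/-- `x ∈ X^S`: the restriction of `x ∈ X**` to `Q` is weak* lower semicontinuous. -/
def lscS {X : Type} [NormedAddCommGroup X] [NormedSpace ℝ X] (K : Set X)
    (x : Bidual X) : Prop :=
  @LowerSemicontinuous (posQ X K) ℝ (qTop X K) _ fun φ => x φ.1

/-- `B^{<∞}`: the bounded functions `Q → X**`. -/
def Bset (X : Type) [NormedAddCommGroup X] [NormedSpace ℝ X] (Q : Type) :
    Set (Q → Bidual X) := {f | ∃ M, ∀ p, ‖f p‖ ≤ M}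

/-- The upper ball topology on `X^S`, generated by the balls
`{y | d(c, y) < ε}` for `c ∈ X^S`. -/
def upTopXS {X : Type} [NormedAddCommGroup X] [NormedSpace ℝ X] (K : Set X) :
    TopologicalSpace {x : Bidual X // lscS K x} :=
  TopologicalSpace.generateFrom
    {s | ∃ c : {x : Bidual X // lscS K x}, ∃ ε : ℝ≥0∞, 0 < ε ∧ s = {y | ddist K c.1 y.1 < ε}}

/-- `f ∈ S`: a bounded function `Q → X**` taking values in `X^S` that is continuous
into `X^S` with its upper ball topology. -/
def MemS {X : Type} [NormedAddCommGroup X] [NormedSpace ℝ X] (K : Set X)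
    {Q : Type} [TopologicalSpace Q] (f : Q → Bidual X) : Prop :=
  f ∈ Bset X Q ∧ ∃ h : ∀ p, lscS K (f p),
    @Continuous Q {x : Bidual X // lscS K x} _ (upTopXS K) fun p => ⟨f p, h p⟩

/-! Let `F` be `f` viewed in the bidual, and let `h` be the pointwise weak* limit of `g_λ` along
an ultrafilter finer than the tails of the net; it exists by Banach–Alaoglu since `‖g_λ p‖ ≤ 1`.
The Cauchy property gives `sup-d(g_λ, h) → 0`, so testing `g_λ →^◦ l` against the hole `h ∈ B`
yields `sup-d(l, h) = 0`, while testing `g_λ →_◦ l` against `F ∈ B` yields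
`sup-d(F, l) ≤ liminf sup-d(F, g_λ)`.

For the reverse inequality, `sup-d(F, g_λ)` is the supremum over the compact space `Q × Q'` of
`u_λ(p, φ) = φ(f p) - g_λ(p)(φ)`. This function is upper semicontinuous because `f` is norm
continuous and `g_λ` is upper-ball continuous with values in `X^S`. The `u_λ` are almost
decreasing by the Cauchy property, and pointwise they cluster at `φ(f p) - h(p)(φ)`, so a
Dini-type argument gives `limsup sup-d(F, g_λ) ≤ sup-d(F, h) ≤ sup-d(F, l)`. -/

open Filter Topology

section Nets

variable {ι : Type} {r : ι → ι → Prop}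

def tails (r : ι → ι → Prop) : Filter ι := ⨅ γ, 𝓟 {δ | r γ δ}

theorem eventually_tails (γ : ι) : ∀ᶠ δ in tails r, r γ δ :=
  mem_iInf_of_mem γ (mem_principal_self _)

theorem tails_neBot [Nonempty ι] (htr : TransRel r) (hdir : DirRel r) : (tails r).NeBot := by
  refine iInf_neBot_of_directed (fun γ γ' => ?_) fun γ => ?_
  · obtain ⟨δ, hγδ, hγ'δ⟩ := hdir γ γ'
    exact ⟨δ, principal_mono.2 fun _ => htr _ _ _ hγδ, principal_mono.2 fun _ => htr _ _ _ hγ'δ⟩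
  · obtain ⟨δ, hγδ, -⟩ := hdir γ γ
    exact principal_neBot_iff.2 ⟨δ, hγδ⟩

theorem liminfN_le_limsupN (hdir : DirRel r) (a : ι → ℝ≥0∞) : liminfN r a ≤ limsupN r a :=
  iSup_le fun γ => le_iInf fun γ' => by
    obtain ⟨δ, hγδ, hγ'δ⟩ := hdir γ γ'
    exact (iInf₂_le δ hγδ).trans (le_iSup₂ (f := fun δ (_ : r γ' δ) => a δ) δ hγ'δ)

theorem tendstoN_of_le_liminfN_of_limsupN_le (hdir : DirRel r) {a : ι → ℝ≥0∞} {L : ℝ≥0∞}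
    (hlow : L ≤ liminfN r a) (hup : limsupN r a ≤ L) : TendstoN r a L :=
  have hle := liminfN_le_limsupN hdir a
  ⟨le_antisymm (hle.trans hup) hlow, le_antisymm hup (hlow.trans hle)⟩

theorem limsupN_le_of_forall_pos {a : ι → ℝ≥0∞} {b : ℝ≥0∞}
    (h : ∀ ε : ℝ, 0 < ε → ∃ γ₀, ∀ γ, r γ₀ γ → a γ ≤ b + ENNReal.ofReal ε) :
    limsupN r a ≤ b :=
  ENNReal.le_of_forall_pos_le_add fun ε hε _ => by
    obtain ⟨γ₀, hγ₀⟩ := h ε hε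
    rw [← ENNReal.ofReal_coe_nnreal]
    exact (iInf_le _ γ₀).trans (iSup₂_le hγ₀)

theorem UpperConvOn.eq_zero {Y : Type} {d : Y → Y → ℝ≥0∞} {T : Set Y} {x : ι → Y} {l c : Y}
    (hdir : DirRel r) (hx : UpperConvOn r d T x l) (hc : c ∈ T)
    (hxc : ∀ ε : ℝ, 0 < ε → ∃ γ₀, ∀ γ, r γ₀ γ → d (x γ) c ≤ ENNReal.ofReal ε) :
    d l c = 0 := by
  refine le_antisymm (ENNReal.le_of_forall_pos_le_add fun ε hε _ => ?_) zero_le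
  obtain ⟨γ₀, hγ₀⟩ := hxc ε hε
  simp only [ENNReal.ofReal_coe_nnreal] at hγ₀
  refine (hx c hc).trans (iSup_le fun γ => ?_)
  obtain ⟨δ, hγδ, hγ₀δ⟩ := hdir γ γ₀
  simpa using (iInf₂_le δ hγδ).trans (hγ₀ δ hγ₀δ)

theorem IsDistance.supD {Q Y : Type} {d : Y → Y → ℝ≥0∞} (hd : IsDistance d) :
    IsDistance (supD d : (Q → Y) → (Q → Y) → ℝ≥0∞) := fun f g h =>
  iSup_le fun p => (hd _ (g p) _).trans (add_le_add (le_iSup (fun p => d (f p) (g p)) p)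
    (le_iSup (fun p => d (g p) (h p)) p))

end Nets

theorem UpperSemicontinuous.sub_lowerSemicontinuous {α : Type} [TopologicalSpace α]
    {f g : α → ℝ} (hf : UpperSemicontinuous f) (hg : LowerSemicontinuous g) :
    UpperSemicontinuous fun x => f x - g x :=
  hf.add fun x y hy => (hg x (-y) (by linarith)).mono fun _ h => by linarith

/-- Dini's theorem, for an almost decreasing net and with a one-sided pointwise limit. -/
theorem exists_forall_le_add_of_upperSemicontinuous {ι Y : Type} [TopologicalSpace Y]
    [CompactSpace Y] [Nonempty ι] {r : ι → ι → Prop} (htr : TransRel r) (hdir : DirRel r)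
    {u : ι → Y → ℝ} {M : ℝ} (hu : ∀ γ, UpperSemicontinuous (u γ))
    (hanti : ∀ ε : ℝ, 0 < ε → ∃ γ₀, ∀ γ δ, r γ₀ γ → r γ δ → ∀ y, u δ y ≤ u γ y + ε)
    (hM : ∀ y, ∀ ε : ℝ, 0 < ε → ∀ γ, ∃ δ, r γ δ ∧ u δ y < M + ε) {ε : ℝ} (hε : 0 < ε) :
    ∃ γ₀, ∀ γ, r γ₀ γ → ∀ y, u γ y ≤ M + ε := by
  obtain ⟨γc, hγc⟩ := hanti (ε / 3) (by positivity)
  by_contra! hbad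
  have hlarge : ∀ γ, r γc γ → ∃ y, M + 2 * (ε / 3) < u γ y := fun γ hγ => by
    obtain ⟨γ₁, hγγ₁, -⟩ := hdir γ γ
    obtain ⟨δ, hγ₁δ, y, hy⟩ := hbad γ₁
    exact ⟨y, by linarith [hγc γ δ hγ (htr _ _ _ hγγ₁ hγ₁δ) y]⟩
  have : Nonempty Y := (hbad γc).elim fun _ h => ⟨h.2.choose⟩
  choose! ys hys using hlarge
  have := tails_neBot htr hdir
  obtain ⟨y, -, hy⟩ := isCompact_univ.exists_mapClusterPt (f := tails r) (u := ys)
    (le_principal_iff.2 univ_mem)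
  obtain ⟨β, hγcβ, hβ⟩ := hM y (ε / 3) (by positivity) γc
  obtain ⟨γ, hyγ, hβγ, hγcγ⟩ := ((mapClusterPt_iff_frequently.1 hy _ (hu β y _ hβ)).and_eventually
    ((eventually_tails (r := r) β).and (eventually_tails γc))).exists
  linarith [hys γ hγcγ, hγc β γ hγcβ hβγ (ys γ), show u β (ys γ) < M + ε / 3 from hyγ]

theorem exists_tendsto_apply_of_norm_le {E ι : Type} [NormedAddCommGroup E] [NormedSpace ℝ E]
    (U : Ultrafilter ι) (φ : ι → StrongDual ℝ E) {C : ℝ} (hφ : ∀ i, ‖φ i‖ ≤ C) :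
    ∃ ψ : StrongDual ℝ E, ‖ψ‖ ≤ C ∧ ∀ v, Tendsto (fun i => φ i v) U (𝓝 (ψ v)) := by
  obtain ⟨ψ, hψC, hψ⟩ := (WeakDual.isCompact_closedBall 0 C).ultrafilter_le_nhds
    (U.map (fun i => StrongDual.toWeakDual (φ i)))
    (le_principal_iff.2 (Ultrafilter.mem_map.2 (univ_mem' fun i => by simpa using hφ i)))
  refine ⟨WeakDual.toStrongDual ψ, by simpa using hψC, fun v => ?_⟩
  exact ((WeakDual.eval_continuous v).tendsto ψ).comp hψ

section Bidual

variable {X : Type} [NormedAddCommGroup X] [NormedSpace ℝ X] {K : Set X}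

theorem ofReal_apply_sub_apply_le_ddist {x y : Bidual X} {φ : StrongDual ℝ X}
    (hφ : φ ∈ posQ X K) : ENNReal.ofReal (x φ - y φ) ≤ ddist K x y :=
  le_iSup₂ (f := fun φ (_ : φ ∈ posQ X K) => ENNReal.ofReal ((x - y) φ)) φ hφ

theorem apply_sub_apply_le_of_ddist_le {x y : Bidual X} {c : ℝ} (hc : 0 ≤ c)
    (h : ddist K x y ≤ ENNReal.ofReal c) {φ : StrongDual ℝ X} (hφ : φ ∈ posQ X K) :
    x φ - y φ ≤ c :=
  (ENNReal.ofReal_le_ofReal_iff hc).1 ((ofReal_apply_sub_apply_le_ddist hφ).trans h)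

theorem ddist_le_ofReal {x y : Bidual X} {c : ℝ} (h : ∀ φ ∈ posQ X K, x φ - y φ ≤ c) :
    ddist K x y ≤ ENNReal.ofReal c :=
  iSup₂_le fun φ hφ => ENNReal.ofReal_le_ofReal (h φ hφ)

theorem ddist_self (x : Bidual X) : ddist K x x = 0 := by
  simp [ddist]

theorem isDistance_ddist (K : Set X) : IsDistance (ddist K) := fun x y z =>
  iSup₂_le fun φ hφ => by
    rw [show (x - z) φ = x φ - y φ + (y φ - z φ) by simp]
    exact ENNReal.ofReal_add_le.trans
      (add_le_add (ofReal_apply_sub_apply_le_ddist hφ) (ofReal_apply_sub_apply_le_ddist hφ))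

theorem compactSpace_posQ (K : Set X) : @CompactSpace (posQ X K) (qTop X K) := by
  let := qTop X K
  have hind : Topology.IsInducing fun φ : posQ X K => StrongDual.toWeakDual φ.1 :=
    ⟨induced_compose.symm⟩
  have hclosed : IsClosed (WeakDual.toStrongDual ⁻¹' posQ X K : Set (WeakDual ℝ X)) := by
    convert (WeakDual.isClosed_closedBall 0 1).inter <| isClosed_biInter fun v (_ : v ∈ K) =>
      (isClosed_le continuous_const (WeakDual.eval_continuous v) :
        IsClosed {φ : WeakDual ℝ X | (0 : ℝ) ≤ φ v}) using 1
    ext φ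
    simp [posQ]
  rw [← isCompact_univ_iff, hind.isCompact_iff, Set.image_univ]
  convert (WeakDual.isCompact_closedBall (0 : StrongDual ℝ X) 1).of_isClosed_subset hclosed
    fun φ hφ => by simpa using hφ.1
  ext φ
  exact ⟨fun ⟨ψ, hψ⟩ => hψ ▸ ψ.2, fun hφ => ⟨⟨φ, hφ⟩, rfl⟩⟩

section Semicontinuity

variable {Q : Type} [TopologicalSpace Q]

theorem continuous_apply_posQ (f : C(Q, X)) :
    @Continuous (Q × posQ X K) ℝ (@instTopologicalSpaceProd _ _ _ (qTop X K)) _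
      fun x => x.2.1 (f x.1) := by
  let := qTop X K
  refine continuous_iff_continuousAt.2 fun ⟨p, φ⟩ => ?_
  have heval : Continuous fun φ : posQ X K => φ.1 (f p) :=
    (continuous_apply (f p)).comp continuous_induced_dom
  have hfix : Tendsto (fun x : Q × posQ X K => x.2.1 (f p)) (𝓝 (p, φ)) (𝓝 (φ.1 (f p))) :=
    (heval.comp continuous_snd).tendsto (p, φ)
  -- `‖x.2‖ ≤ 1` makes the evaluation jointly continuous despite the weak* topology.
  have hmove : Tendsto (fun x : Q × posQ X K => x.2.1 (f x.1 - f p)) (𝓝 (p, φ)) (𝓝 0) := by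
    refine squeeze_zero_norm (a := fun x => ‖f x.1 - f p‖) (fun x => ?_) ?_
    · exact (x.2.1.le_opNorm _).trans (mul_le_of_le_one_left (norm_nonneg _) x.2.2.1)
    · simpa using ((f.continuous.comp continuous_fst).sub
        (continuous_const (y := f p))).norm.tendsto (p, φ)
  rw [ContinuousAt]
  simpa using hfix.add hmove

theorem MemS.eventually_ddist_lt {g : Q → Bidual X} (hg : MemS K g) (p : Q) {ε : ℝ≥0∞}
    (hε : 0 < ε) : ∀ᶠ p' in 𝓝 p, ddist K (g p) (g p') < ε := by
  obtain ⟨-, hlsc, hcont⟩ := hg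
  have hopen : @IsOpen _ (upTopXS K) {y : {x // lscS K x} | ddist K (g p) y.1 < ε} :=
    TopologicalSpace.isOpen_generateFrom_of_mem ⟨⟨g p, hlsc p⟩, ε, hε, rfl⟩
  exact (continuous_def.1 hcont _ hopen).mem_nhds (by simpa [ddist_self] using hε)

theorem MemS.lowerSemicontinuous_apply {g : Q → Bidual X} (hg : MemS K g) :
    @LowerSemicontinuous (Q × posQ X K) ℝ (@instTopologicalSpaceProd _ _ _ (qTop X K)) _
      fun x => g x.1 x.2.1 := by
  let := qTop X K
  rintro ⟨p, φ⟩ y (hy : y < g p φ.1)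
  obtain ⟨η, hη, rfl⟩ : ∃ η, 0 < η ∧ y = g p φ.1 - 2 * η :=
    ⟨(g p φ.1 - y) / 2, by linarith, by ring⟩
  have hφ : ∀ᶠ φ' in 𝓝 φ, g p φ - η < g p φ'.1 := hg.2.choose p φ _ (by linarith)
  filter_upwards [(hg.eventually_ddist_lt p (ENNReal.ofReal_pos.2 hη)).prod_nhds hφ]
    with x ⟨hp', hφ'⟩
  linarith [apply_sub_apply_le_of_ddist_le hη.le hp'.le x.2.2]

end Semicontinuity

variable {ι Q : Type} {r : ι → ι → Prop}

theorem DCauchyN.apply_sub_apply_le {g : ι → Q → Bidual X}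
    (hC : DCauchyN r (supD (ddist K)) g) {ε : ℝ} (hε : 0 < ε) :
    ∃ γ₀, ∀ γ δ, r γ₀ γ → r γ δ → ∀ p, ∀ φ ∈ posQ X K, g γ p φ - g δ p φ ≤ ε := by
  obtain ⟨γ₀, hγ₀⟩ := hC (ENNReal.ofReal ε) (ENNReal.ofReal_pos.2 hε)
  exact ⟨γ₀, fun γ δ hγ hδ p φ hφ => apply_sub_apply_le_of_ddist_le hε.le
    ((le_iSup (fun p => ddist K (g γ p) (g δ p)) p).trans (hγ₀ γ δ hγ hδ).le) hφ⟩

theorem exists_limit_of_dCauchyN [Nonempty ι] (htr : TransRel r) (hdir : DirRel r)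
    {g : ι → Q → Bidual X} (hg : ∀ γ p, ‖g γ p‖ ≤ 1) (hC : DCauchyN r (supD (ddist K)) g) :
    ∃ h ∈ Bset X Q,
      (∀ ε : ℝ, 0 < ε → ∃ γ₀, ∀ γ, r γ₀ γ → supD (ddist K) (g γ) h ≤ ENNReal.ofReal ε) ∧
      ∀ p φ, ∀ ε : ℝ, 0 < ε → ∀ γ, ∃ δ, r γ δ ∧ h p φ - ε < g δ p φ := by
  have := tails_neBot htr hdir
  set U := Ultrafilter.of (tails r)
  have hU : ∀ γ, ∀ᶠ δ in (U : Filter ι), r γ δ := fun γ =>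
    Ultrafilter.of_le _ (eventually_tails γ)
  choose h hh hlim using fun p => exists_tendsto_apply_of_norm_le U (fun γ => g γ p) (hg · p)
  refine ⟨h, ⟨1, hh⟩, fun ε hε => ?_, fun p φ ε hε γ => ?_⟩
  · obtain ⟨γ₀, hγ₀⟩ := hC.apply_sub_apply_le hε
    refine ⟨γ₀, fun γ hγ => iSup_le fun p => ddist_le_ofReal fun φ hφ => ?_⟩
    have hev : ∀ᶠ δ in (U : Filter ι), g γ p φ - ε ≤ g δ p φ :=
      (hU γ).mono fun δ hδ => by linarith [hγ₀ γ δ hγ hδ p φ hφ]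
    linarith [ge_of_tendsto (hlim p φ) hev]
  · obtain ⟨δ, hδ, hγδ⟩ :=
      (((hlim p φ).eventually (lt_mem_nhds (sub_lt_self _ hε))).and (hU γ)).exists
    exact ⟨δ, hγδ, hδ⟩

theorem limsupN_supD_le [TopologicalSpace Q] [CompactSpace Q] [Nonempty ι] (htr : TransRel r)
    (hdir : DirRel r) (f : C(Q, X)) {g : ι → Q → Bidual X} {h : Q → Bidual X}
    (hgS : ∀ γ, MemS K (g γ)) (hC : DCauchyN r (supD (ddist K)) g)
    (hh : ∀ p φ, ∀ ε : ℝ, 0 < ε → ∀ γ, ∃ δ, r γ δ ∧ h p φ - ε < g δ p φ) :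
    limsupN r
        (fun γ => supD (ddist K) (fun p => NormedSpace.inclusionInDoubleDual ℝ X (f p)) (g γ))
      ≤ supD (ddist K) (fun p => NormedSpace.inclusionInDoubleDual ℝ X (f p)) h := by
  set F : Q → Bidual X := fun p => NormedSpace.inclusionInDoubleDual ℝ X (f p)
  rcases eq_top_or_lt_top (supD (ddist K) F h) with htop | hfin
  · simp [htop]
  let := qTop X K
  have := compactSpace_posQ K
  set M := (supD (ddist K) F h).toReal
  have hM : ∀ p, ∀ φ ∈ posQ X K, φ (f p) - h p φ ≤ M := fun p φ hφ => by
    have : ENNReal.ofReal (F p φ - h p φ) ≤ supD (ddist K) F h :=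
      (ofReal_apply_sub_apply_le_ddist hφ).trans (le_iSup (fun p => ddist K (F p) (h p)) p)
    rwa [← ENNReal.ofReal_toReal hfin.ne, ENNReal.ofReal_le_ofReal_iff ENNReal.toReal_nonneg,
      NormedSpace.dual_def] at this
  refine limsupN_le_of_forall_pos fun ε hε => ?_
  obtain ⟨γ₀, hγ₀⟩ := exists_forall_le_add_of_upperSemicontinuous htr hdir
    (u := fun γ (x : Q × posQ X K) => x.2.1 (f x.1) - g γ x.1 x.2.1) (M := M)
    (fun γ => (continuous_apply_posQ f).upperSemicontinuous.sub_lowerSemicontinuous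
      (hgS γ).lowerSemicontinuous_apply)
    (fun ε hε => (hC.apply_sub_apply_le hε).imp fun γ₀ hγ₀ γ δ hγ hδ x => by
      linarith [hγ₀ γ δ hγ hδ x.1 x.2.1 x.2.2])
    (fun x ε hε γ => (hh x.1 x.2.1 ε hε γ).imp fun δ hδ => ⟨hδ.1, by
      linarith [hδ.2, hM x.1 x.2.1 x.2.2]⟩) hε
  refine ⟨γ₀, fun γ hγ => ?_⟩
  rw [← ENNReal.ofReal_toReal hfin.ne, ← ENNReal.ofReal_add ENNReal.toReal_nonneg hε.le]
  exact iSup_le fun p => ddist_le_ofReal fun φ hφ => by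
    simpa [F, NormedSpace.dual_def] using hγ₀ γ hγ (p, ⟨φ, hφ⟩)

end Bidual

theorem stmt17_general (X : Type) [NormedAddCommGroup X] [NormedSpace ℝ X]
    (K : Set X)
    (Q : Type) [TopologicalSpace Q] [CompactSpace Q]
    (f : C(Q, X))
    (ι : Type) (r : ι → ι → Prop) (g : ι → Q → Bidual X) (l : Q → Bidual X)
    (hne : Nonempty ι) (htr : TransRel r) (hdir : DirRel r)
    (hg : ∀ i, MemS K (g i) ∧ ∀ p, ‖g i p‖ ≤ 1)
    (hC : DCauchyN r (supD (ddist K)) g)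
    (hconv : BiConvOn r (supD (ddist K)) (Bset X Q) g l) :
    TendstoN r
      (fun i => supD (ddist K) (fun p => NormedSpace.inclusionInDoubleDual ℝ X (f p)) (g i))
      (supD (ddist K) (fun p => NormedSpace.inclusionInDoubleDual ℝ X (f p)) l) := by
  set F : Q → Bidual X := fun p => NormedSpace.inclusionInDoubleDual ℝ X (f p)
  have hFB : F ∈ Bset X Q :=
    ⟨‖f‖, fun p => (NormedSpace.double_dual_bound ℝ X (f p)).trans (f.norm_coe_le_norm p)⟩
  obtain ⟨h, hhB, hgh, hh⟩ := exists_limit_of_dCauchyN htr hdir (fun γ => (hg γ).2) hC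
  have hlh : supD (ddist K) l h = 0 := hconv.1.eq_zero hdir hhB hgh
  refine tendstoN_of_le_liminfN_of_limsupN_le hdir (hconv.2 F hFB) ?_
  calc _ ≤ supD (ddist K) F h := limsupN_supD_le htr hdir f (fun γ => (hg γ).1) hC hh
    _ ≤ supD (ddist K) F l + supD (ddist K) l h := (isDistance_ddist K).supD F l h
    _ = supD (ddist K) F l := by rw [hlh, add_zero]

/-- `C^1 ⊆ S^{1F}`: every `f ∈ C(Q,X)` with `‖f p‖ ≤ 1` for all `p` is
`sup-d`-finite in `S^1`: `sup-d(f, g_λ) → sup-d(f, g)` whenever `(g_λ)` is a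
`sup-d`-Cauchy net in `S^1` with `g_λ →^◦_◦ g ∈ S^1` (holes tested against `B`). -/
theorem stmt17 (X : Type) [NormedAddCommGroup X] [NormedSpace ℝ X] [CompleteSpace X]
    (K : Set X) (hK : IsGoodCone X K)
    (Q : Type) [TopologicalSpace Q] [CompactSpace Q] [T2Space Q]
    (f : C(Q, X)) (hf1 : ∀ p, ‖f p‖ ≤ 1)
    (ι : Type) (r : ι → ι → Prop) (g : ι → Q → Bidual X) (l : Q → Bidual X)
    (hne : Nonempty ι) (htr : TransRel r) (hdir : DirRel r)
    (hg : ∀ i, MemS K (g i) ∧ ∀ p, ‖g i p‖ ≤ 1)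
    (hC : DCauchyN r (supD (ddist K)) g)
    (hconv : BiConvOn r (supD (ddist K)) (Bset X Q) g l)
    (hl : MemS K l ∧ ∀ p, ‖l p‖ ≤ 1) :
    TendstoN r
      (fun i => supD (ddist K) (fun p => NormedSpace.inclusionInDoubleDual ℝ X (f p)) (g i))
      (supD (ddist K) (fun p => NormedSpace.inclusionInDoubleDual ℝ X (f p)) l) :=
  stmt17_general X K Q f ι r g l hne htr hdir hg hC hconv
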